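/- For every n ≥ 1, d(n, n) = d(n, n − 1) = Cat(n), the n-th Catalan number; that is, the number of transfer systems O_m on [n] compatible with the complete transfer system equals Cat(n), and the only transfer system on [n] in the image of the (n−1)-fold wrapping map is the complete one. -/

import Mathlib

/-- A transfer system on `[n] = {1, …, n}`, encoded as a relation on `ℕ`
supported on pairs `1 ≤ i ≤ j ≤ n`: reflexive on `{1, …, n}`, transitive,
contained in `≤`, and closed under restriction. For `n = 0` this forces the
empty relation. -/
def IsTransferSystem (n : ℕ) (R : ℕ → ℕ → Prop) : Prop :=
  (∀ i, 1 ≤ i → i ≤ n → R i i) ∧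
  (∀ i j k, R i j → R j k → R i k) ∧
  (∀ i j, R i j → 1 ≤ i ∧ i ≤ j ∧ j ≤ n) ∧
  (∀ i j k, R i j → i ≤ k → k ≤ j → R i k)

/-- `(O_a, O_m)` is compatible: whenever `i →_{O_m} j` and `i ≤ k ≤ j`, then `k →_{O_a} j`. -/
def Compatible (Ra Rm : ℕ → ℕ → Prop) : Prop :=
  ∀ i j k, Rm i j → i ≤ k → k ≤ j → Ra k j

/-- Concatenation `O_L ⊕ O_R` of a transfer system on `[k]` with one on `[n-k]`. -/
def concatTS (k : ℕ) (RL RR : ℕ → ℕ → Prop) : ℕ → ℕ → Prop :=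
  fun i j => (j ≤ k ∧ RL i j) ∨ (k + 1 ≤ i ∧ RR (i - k) (j - k))

/-- The restriction `i_k^* O` to `[k]`. -/
def restrictTS (k : ℕ) (R : ℕ → ℕ → Prop) : ℕ → ℕ → Prop :=
  fun i j => j ≤ k ∧ R i j

/-- The geometric fixed points `Φ^k O`, a relation on `[n - k]`. -/
def gfpTS (k : ℕ) (R : ℕ → ℕ → Prop) : ℕ → ℕ → Prop :=
  fun i j => 1 ≤ i ∧ R (i + k) (j + k)

/-- The wrapping `w(O)` of a transfer system on `[n]`, a transfer system on `[n+1]`: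
`i → j` iff `i = 1` (and `j` is in range) or `2 ≤ i ≤ j` and `(i-1) →_O (j-1)`. -/
def wrapTS (n : ℕ) (R : ℕ → ℕ → Prop) : ℕ → ℕ → Prop :=
  fun i j => (i = 1 ∧ 1 ≤ j ∧ j ≤ n + 1) ∨ (2 ≤ i ∧ i ≤ j ∧ R (i - 1) (j - 1))

/-- The complete transfer system on `[n]`. -/
def completeTS (n : ℕ) : ℕ → ℕ → Prop :=
  fun i j => 1 ≤ i ∧ i ≤ j ∧ j ≤ n

/-- The concatenation `O_{k_1}^cpt ⊕ … ⊕ O_{k_r}^cpt` of complete transfer systems. -/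
def concatCompletes : List ℕ → (ℕ → ℕ → Prop)
  | [] => fun _ _ => False
  | k :: L => concatTS k (completeTS k) (concatCompletes L)

/-- A transfer system on `[n]` is saturated if it is a concatenation of complete
transfer systems `O_{k_1}^cpt ⊕ … ⊕ O_{k_r}^cpt` with the `k_i` positive and summing to `n`. -/
def IsSaturated (n : ℕ) (R : ℕ → ℕ → Prop) : Prop :=
  ∃ L : List ℕ, (∀ k ∈ L, 0 < k) ∧ L.sum = n ∧ R = concatCompletes L

/-- The core of a transfer system on `[n]`: `i → j` iff `m →_O (m+1)` for every
`i ≤ m < j` (for `i, j` in range). -/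
def coreTS (n : ℕ) (R : ℕ → ℕ → Prop) : ℕ → ℕ → Prop :=
  fun i j => 1 ≤ i ∧ i ≤ j ∧ j ≤ n ∧ ∀ m, i ≤ m → m < j → R m (m + 1)

/-- `wpow m i R` is the `i`-fold wrapping `w^i(R)` of a transfer system `R` on `[m]`,
a transfer system on `[m + i]`. -/
def wpow (m : ℕ) : ℕ → (ℕ → ℕ → Prop) → (ℕ → ℕ → Prop)
  | 0, R => R
  | i + 1, R => wrapTS (m + i) (wpow m i R)

/-- `d(n, i)`: the number of compatible pairs `(O_a, O_m)` of transfer systems on `[n]`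
such that `O_a` lies in the image of the `i`-fold wrapping map, i.e. `O_a = w^i(O)` for
some transfer system `O` on `[n - i]`. -/
noncomputable def dCount (n i : ℕ) : ℕ :=
  Nat.card {p : (ℕ → ℕ → Prop) × (ℕ → ℕ → Prop) //
    IsTransferSystem n p.1 ∧ IsTransferSystem n p.2 ∧ Compatible p.1 p.2 ∧
    ∃ R : ℕ → ℕ → Prop, IsTransferSystem (n - i) R ∧ p.1 = wpow (n - i) i R}

/-! ### Auxiliary lemmas -/

section Aux

lemma complete_isTS (n : ℕ) : IsTransferSystem n (completeTS n) := by
  refine ⟨fun i h1 h2 => ⟨h1, le_refl i, h2⟩, ?_, ?_, ?_⟩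
  · intro i j k ⟨a1, a2, a3⟩ ⟨b1, b2, b3⟩
    exact ⟨a1, by omega, b3⟩
  · exact fun i j h => h
  · intro i j k ⟨a1, a2, a3⟩ h1 h2
    exact ⟨a1, h1, by omega⟩

lemma compat_complete {n : ℕ} {Rm : ℕ → ℕ → Prop} (h : IsTransferSystem n Rm) :
    Compatible (completeTS n) Rm := by
  intro i j k hij hik hkj
  obtain ⟨-, -, hb, -⟩ := h
  obtain ⟨h1, h2, h3⟩ := hb i j hij
  exact ⟨by omega, hkj, h3⟩

lemma falseRel_isTS : IsTransferSystem 0 (fun _ _ => False) := by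
  refine ⟨fun i h1 h2 => by omega, fun _ _ _ h => h.elim, fun _ _ h => h.elim,
    fun _ _ _ h => h.elim⟩

lemma ts_zero_eq {R : ℕ → ℕ → Prop} (h : IsTransferSystem 0 R) :
    R = fun _ _ => False := by
  funext i j
  apply propext
  constructor
  · intro hij
    obtain ⟨h1, h2, h3⟩ := h.2.2.1 i j hij
    omega
  · exact fun h => h.elim

lemma ts_one_eq {R : ℕ → ℕ → Prop} (h : IsTransferSystem 1 R) :
    R = completeTS 1 := by
  funext i j
  apply propext
  constructor
  · intro hij
    obtain ⟨h1, h2, h3⟩ := h.2.2.1 i j hij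
    exact ⟨h1, h2, h3⟩
  · intro ⟨h1, h2, h3⟩
    have : i = 1 ∧ j = 1 := by omega
    obtain ⟨rfl, rfl⟩ := this
    exact h.1 1 le_rfl le_rfl

lemma wrap_complete (n : ℕ) : wrapTS n (completeTS n) = completeTS (n + 1) := by
  funext i j
  apply propext
  simp only [wrapTS, completeTS]
  omega

lemma wpow_complete (m : ℕ) : ∀ i, wpow m i (completeTS m) = completeTS (m + i)
  | 0 => rfl
  | i + 1 => by
    show wrapTS (m + i) (wpow m i (completeTS m)) = _
    rw [wpow_complete m i, wrap_complete, Nat.add_assoc]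

lemma wpow_false : ∀ n, 1 ≤ n → wpow 0 n (fun _ _ => False) = completeTS n
  | 1, _ => by
    show wrapTS 0 _ = _
    funext i j
    apply propext
    constructor
    · rintro (⟨rfl, h1, h2⟩ | ⟨-, -, hf⟩)
      · exact ⟨le_rfl, h1, h2⟩
      · exact hf.elim
    · rintro ⟨h1, h2, h3⟩
      exact Or.inl ⟨by omega, by omega, by omega⟩
  | n + 2, _ => by
    show wrapTS (0 + (n + 1)) (wpow 0 (n + 1) _) = _
    rw [wpow_false (n + 1) (by omega), Nat.zero_add, wrap_complete]

end Aux

/-! ### The tree bijection -/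

def treeRel : BinaryTree Unit → ℕ → ℕ → Prop
  | BinaryTree.nil => fun _ _ => False
  | BinaryTree.node _ l r => fun i j =>
      (i = 1 ∧ 1 ≤ j ∧ j ≤ l.numNodes + 1) ∨
      (2 ≤ i ∧ treeRel l (i - 1) (j - 1)) ∨
      (l.numNodes + 2 ≤ i ∧ treeRel r (i - l.numNodes - 1) (j - l.numNodes - 1))

lemma treeRel_isTS : ∀ t : BinaryTree Unit, IsTransferSystem t.numNodes (treeRel t)
  | BinaryTree.nil => falseRel_isTS
  | BinaryTree.node a l r => by
    obtain ⟨lrefl, ltrans, lbdd, lres⟩ := treeRel_isTS l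
    obtain ⟨rrefl, rtrans, rbdd, rres⟩ := treeRel_isTS r
    set p := l.numNodes with hp
    set q := r.numNodes with hq
    have hN : (BinaryTree.node a l r).numNodes = p + q + 1 := rfl
    rw [hN]
    refine ⟨?_, ?_, ?_, ?_⟩
    · -- reflexive
      intro i h1 h2
      rcases Nat.lt_or_ge i 2 with hi | hi
      · exact Or.inl ⟨by omega, by omega, by omega⟩
      rcases le_or_gt i (p + 1) with hip | hip
      · exact Or.inr (Or.inl ⟨hi, lrefl (i - 1) (by omega) (by omega)⟩)
      · exact Or.inr (Or.inr ⟨by omega, rrefl (i - p - 1) (by omega) (by omega)⟩)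
    · -- transitive
      intro i j k hij hjk
      rcases hij with ⟨rfl, hj1, hj2⟩ | ⟨hi2, hL⟩ | ⟨hi2, hR⟩
      · rcases hjk with ⟨rfl, hk1, hk2⟩ | ⟨hj2', hL'⟩ | ⟨hj2', hR'⟩
        · exact Or.inl ⟨rfl, hk1, hk2⟩
        · obtain ⟨b1, b2, b3⟩ := lbdd _ _ hL'
          exact Or.inl ⟨rfl, by omega, by omega⟩
        · omega
      · obtain ⟨b1, b2, b3⟩ := lbdd _ _ hL
        rcases hjk with ⟨rfl, hk1, hk2⟩ | ⟨hj2', hL'⟩ | ⟨hj2', hR'⟩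
        · omega
        · exact Or.inr (Or.inl ⟨hi2, ltrans _ _ _ hL hL'⟩)
        · omega
      · obtain ⟨b1, b2, b3⟩ := rbdd _ _ hR
        rcases hjk with ⟨rfl, hk1, hk2⟩ | ⟨hj2', hL'⟩ | ⟨hj2', hR'⟩
        · omega
        · obtain ⟨c1, c2, c3⟩ := lbdd _ _ hL'
          omega
        · exact Or.inr (Or.inr ⟨hi2, rtrans _ _ _ hR hR'⟩)
    · -- bounds
      intro i j hij
      rcases hij with ⟨rfl, hj1, hj2⟩ | ⟨hi2, hL⟩ | ⟨hi2, hR⟩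
      · omega
      · obtain ⟨b1, b2, b3⟩ := lbdd _ _ hL
        omega
      · obtain ⟨b1, b2, b3⟩ := rbdd _ _ hR
        omega
    · -- restriction
      intro i j k hij hik hkj
      rcases hij with ⟨rfl, hj1, hj2⟩ | ⟨hi2, hL⟩ | ⟨hi2, hR⟩
      · exact Or.inl ⟨rfl, by omega, by omega⟩
      · obtain ⟨b1, b2, b3⟩ := lbdd _ _ hL
        exact Or.inr (Or.inl ⟨by omega, lres _ _ (k - 1) hL (by omega) (by omega)⟩)
      · obtain ⟨b1, b2, b3⟩ := rbdd _ _ hR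
        exact Or.inr (Or.inr ⟨by omega, rres _ _ (k - p - 1) hR (by omega) (by omega)⟩)

lemma treeRel_node_one_iff (a : Unit) (l r : BinaryTree Unit) (j : ℕ) :
    treeRel (BinaryTree.node a l r) 1 j ↔ 1 ≤ j ∧ j ≤ l.numNodes + 1 := by
  constructor
  · rintro (⟨-, h1, h2⟩ | ⟨h, -⟩ | ⟨h, -⟩)
    · exact ⟨h1, h2⟩
    · omega
    · omega
  · intro ⟨h1, h2⟩
    exact Or.inl ⟨rfl, h1, h2⟩

lemma treeRel_node_left (a : Unit) (l r : BinaryTree Unit) (i j : ℕ) :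
    treeRel l i j ↔
      treeRel (BinaryTree.node a l r) (i + 1) (j + 1) ∧ 1 ≤ i ∧ j ≤ l.numNodes := by
  obtain ⟨-, -, lbdd, -⟩ := treeRel_isTS l
  obtain ⟨-, -, rbdd, -⟩ := treeRel_isTS r
  constructor
  · intro h
    obtain ⟨b1, b2, b3⟩ := lbdd _ _ h
    refine ⟨Or.inr (Or.inl ⟨by omega, ?_⟩), b1, b3⟩
    simpa using h
  · rintro ⟨(⟨h, -⟩ | ⟨-, hL⟩ | ⟨hi, hR⟩), hi1, hj⟩
    · exact absurd h (by omega)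
    · simpa using hL
    · obtain ⟨b1, b2, b3⟩ := rbdd _ _ hR
      omega

lemma treeRel_node_right (a : Unit) (l r : BinaryTree Unit) (i j : ℕ) :
    treeRel r i j ↔
      treeRel (BinaryTree.node a l r) (i + l.numNodes + 1) (j + l.numNodes + 1) ∧ 1 ≤ i := by
  obtain ⟨-, -, lbdd, -⟩ := treeRel_isTS l
  obtain ⟨-, -, rbdd, -⟩ := treeRel_isTS r
  constructor
  · intro h
    obtain ⟨b1, b2, b3⟩ := rbdd _ _ h
    refine ⟨Or.inr (Or.inr ⟨by omega, ?_⟩), b1⟩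
    have e1 : i + l.numNodes + 1 - l.numNodes - 1 = i := by omega
    have e2 : j + l.numNodes + 1 - l.numNodes - 1 = j := by omega
    rw [e1, e2]; exact h
  · rintro ⟨(⟨h, -⟩ | ⟨-, hL⟩ | ⟨-, hR⟩), hi⟩
    · omega
    · obtain ⟨b1, b2, b3⟩ := lbdd _ _ hL
      omega
    · have e1 : i + l.numNodes + 1 - l.numNodes - 1 = i := by omega
      have e2 : j + l.numNodes + 1 - l.numNodes - 1 = j := by omega
      rwa [e1, e2] at hR

lemma treeRel_injective : ∀ t t' : BinaryTree Unit, treeRel t = treeRel t' → t = t' := by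
  intro t
  induction t with
  | nil =>
    intro t' h
    cases t' with
    | nil => rfl
    | node a' l' r' =>
      exfalso
      have : treeRel (BinaryTree.node a' l' r') 1 1 := Or.inl ⟨rfl, le_rfl, by omega⟩
      rw [← h] at this
      exact this
  | node a l r ihl ihr =>
    intro t' h
    cases t' with
    | nil =>
      exfalso
      have : treeRel (BinaryTree.node a l r) 1 1 := Or.inl ⟨rfl, le_rfl, by omega⟩
      rw [h] at this
      exact this
    | node a' l' r' =>
      -- first, the sizes of the left subtrees agree
      have hp : l.numNodes = l'.numNodes := by
        have h1 : treeRel (BinaryTree.node a l r) 1 (l.numNodes + 1) :=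
          (treeRel_node_one_iff a l r _).mpr ⟨by omega, le_rfl⟩
        have h2 : treeRel (BinaryTree.node a' l' r') 1 (l'.numNodes + 1) :=
          (treeRel_node_one_iff a' l' r' _).mpr ⟨by omega, le_rfl⟩
        rw [h] at h1; rw [← h] at h2
        have h1' := (treeRel_node_one_iff a' l' r' _).mp h1
        have h2' := (treeRel_node_one_iff a l r _).mp h2
        omega
      have hl : treeRel l = treeRel l' := by
        funext i j
        apply propext
        rw [treeRel_node_left a l r, treeRel_node_left a' l' r', h, hp]
      have hr : treeRel r = treeRel r' := by
        funext i j
        apply propext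
        rw [treeRel_node_right a l r, treeRel_node_right a' l' r', h, hp]
      rw [ihl l' hl, ihr r' hr]

lemma treeRel_surjective :
    ∀ n : ℕ, ∀ R : ℕ → ℕ → Prop, IsTransferSystem n R →
      ∃ t : BinaryTree Unit, t.numNodes = n ∧ treeRel t = R := by
  intro n
  induction n using Nat.strong_induction_on with
  | _ n IH =>
    intro R hR
    rcases Nat.eq_zero_or_pos n with rfl | hn
    · exact ⟨BinaryTree.nil, rfl, (ts_zero_eq hR).symm⟩
    obtain ⟨Rrefl, Rtrans, Rbdd, Rres⟩ := hR
    classical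
    set j₀ := Nat.findGreatest (R 1) n with hj₀def
    have hR11 : R 1 1 := Rrefl 1 le_rfl hn
    have hj₀1 : 1 ≤ j₀ := Nat.le_findGreatest hn hR11
    have hj₀n : j₀ ≤ n := Nat.findGreatest_le n
    have hRj₀ : R 1 j₀ := Nat.findGreatest_spec hn hR11
    have hmax : ∀ j, R 1 j → j ≤ j₀ := by
      intro j hj
      by_contra hc
      push_neg at hc
      have hjn : j ≤ n := (Rbdd 1 j hj).2.2
      exact Nat.findGreatest_is_greatest hc hjn hj
    -- Left and right pieces
    set RL : ℕ → ℕ → Prop := fun i j => 1 ≤ i ∧ j ≤ j₀ - 1 ∧ R (i + 1) (j + 1) with hRL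
    set RR : ℕ → ℕ → Prop := fun i j => 1 ≤ i ∧ R (i + j₀) (j + j₀) with hRR
    have hLts : IsTransferSystem (j₀ - 1) RL := by
      refine ⟨?_, ?_, ?_, ?_⟩
      · intro i h1 h2
        exact ⟨h1, h2, Rrefl (i + 1) (by omega) (by omega)⟩
      · rintro i j k ⟨a1, a2, a3⟩ ⟨b1, b2, b3⟩
        exact ⟨a1, b2, Rtrans _ _ _ a3 b3⟩
      · rintro i j ⟨a1, a2, a3⟩
        obtain ⟨b1, b2, b3⟩ := Rbdd _ _ a3
        exact ⟨a1, by omega, a2⟩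
      · rintro i j k ⟨a1, a2, a3⟩ h1 h2
        exact ⟨a1, by omega, Rres _ _ (k + 1) a3 (by omega) (by omega)⟩
    have hRts : IsTransferSystem (n - j₀) RR := by
      refine ⟨?_, ?_, ?_, ?_⟩
      · intro i h1 h2
        exact ⟨h1, Rrefl (i + j₀) (by omega) (by omega)⟩
      · rintro i j k ⟨a1, a2⟩ ⟨b1, b2⟩
        exact ⟨a1, Rtrans _ _ _ a2 b2⟩
      · rintro i j ⟨a1, a2⟩
        obtain ⟨b1, b2, b3⟩ := Rbdd _ _ a2
        exact ⟨a1, by omega, by omega⟩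
      · rintro i j k ⟨a1, a2⟩ h1 h2
        exact ⟨a1, Rres _ _ (k + j₀) a2 (by omega) (by omega)⟩
    obtain ⟨tl, htl, htlR⟩ := IH (j₀ - 1) (by omega) RL hLts
    obtain ⟨tr, htr, htrR⟩ := IH (n - j₀) (by omega) RR hRts
    refine ⟨BinaryTree.node () tl tr, ?_, ?_⟩
    · show tl.numNodes + tr.numNodes + 1 = n
      omega
    funext i j
    apply propext
    have hnod : treeRel (BinaryTree.node () tl tr) i j ↔
        (i = 1 ∧ 1 ≤ j ∧ j ≤ tl.numNodes + 1) ∨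
        (2 ≤ i ∧ treeRel tl (i - 1) (j - 1)) ∨
        (tl.numNodes + 2 ≤ i ∧ treeRel tr (i - tl.numNodes - 1) (j - tl.numNodes - 1)) :=
      Iff.rfl
    rw [hnod, htlR, htrR, htl]
    constructor
    · rintro (⟨rfl, h1, h2⟩ | ⟨h2, a1, a2, a3⟩ | ⟨h2, a1, a2⟩)
      · exact Rres 1 j₀ j hRj₀ h1 (by omega)
      · have e1 : i - 1 + 1 = i := by omega
        rw [e1] at a3
        have hb := Rbdd _ _ a3
        have e2 : j - 1 + 1 = j := by omega
        rwa [e2] at a3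
      · have e1 : i - (j₀ - 1) - 1 + j₀ = i := by omega
        have hb := Rbdd _ _ a2
        have e2 : j - (j₀ - 1) - 1 + j₀ = j := by
          rw [e1] at hb
          omega
        rwa [e1, e2] at a2
    · intro hij
      obtain ⟨b1, b2, b3⟩ := Rbdd _ _ hij
      rcases Nat.lt_or_ge i 2 with hi | hi
      · have hi1 : i = 1 := by omega
        subst hi1
        have hjj := hmax j hij
        exact Or.inl ⟨rfl, by omega, by omega⟩
      rcases le_or_gt i j₀ with hij₀ | hij₀
      · -- j must also be ≤ j₀
        have hR1i : R 1 i := Rres 1 j₀ i hRj₀ (by omega) hij₀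
        have hjj₀ : j ≤ j₀ := hmax j (Rtrans 1 i j hR1i hij)
        refine Or.inr (Or.inl ⟨hi, by omega, by omega, ?_⟩)
        have e1 : i - 1 + 1 = i := by omega
        have e2 : j - 1 + 1 = j := by omega
        rw [e1, e2]; exact hij
      · refine Or.inr (Or.inr ⟨by omega, by omega, ?_⟩)
        have e1 : i - (j₀ - 1) - 1 + j₀ = i := by omega
        have e2 : j - (j₀ - 1) - 1 + j₀ = j := by omega
        rw [e1, e2]; exact hij

lemma card_ts (n : ℕ) :
    Nat.card {R : ℕ → ℕ → Prop // IsTransferSystem n R} = catalan n := by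
  have e : {t : BinaryTree Unit // t ∈ BinaryTree.treesOfNumNodesEq n} ≃
      {R : ℕ → ℕ → Prop // IsTransferSystem n R} := by
    refine Equiv.ofBijective (fun t => ⟨treeRel t.1, ?_⟩) ⟨?_, ?_⟩
    · have := treeRel_isTS t.1
      rwa [BinaryTree.mem_treesOfNumNodesEq.mp t.2] at this
    · intro t t' h
      exact Subtype.ext (treeRel_injective _ _ (congrArg Subtype.val h))
    · rintro ⟨R, hR⟩
      obtain ⟨t, ht, htR⟩ := treeRel_surjective n R hR
      exact ⟨⟨t, BinaryTree.mem_treesOfNumNodesEq.mpr ht⟩, Subtype.ext htR⟩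
  rw [← Nat.card_congr e, Nat.card_eq_finsetCard,
    BinaryTree.treesOfNumNodesEq_card_eq_catalan]

lemma himg_n {n : ℕ} (hn : 1 ≤ n) (p1 : ℕ → ℕ → Prop) :
    (∃ R, IsTransferSystem (n - n) R ∧ p1 = wpow (n - n) n R) ↔ p1 = completeTS n := by
  rw [Nat.sub_self]
  constructor
  · rintro ⟨R, hR, rfl⟩
    rw [ts_zero_eq hR, wpow_false n hn]
  · rintro rfl
    exact ⟨fun _ _ => False, falseRel_isTS, (wpow_false n hn).symm⟩

lemma himg_pred {n : ℕ} (hn : 1 ≤ n) (p1 : ℕ → ℕ → Prop) :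
    (∃ R, IsTransferSystem 1 R ∧ p1 = wpow 1 (n - 1) R) ↔ p1 = completeTS n := by
  constructor
  · rintro ⟨R, hR, rfl⟩
    rw [ts_one_eq hR, wpow_complete 1 (n - 1), show 1 + (n - 1) = n by omega]
  · rintro rfl
    refine ⟨completeTS 1, complete_isTS 1, ?_⟩
    rw [wpow_complete 1 (n - 1), show 1 + (n - 1) = n by omega]

lemma dCount_eq_catalan {n i : ℕ}
    (himg : ∀ p1 : ℕ → ℕ → Prop,
      (∃ R, IsTransferSystem (n - i) R ∧ p1 = wpow (n - i) i R) ↔ p1 = completeTS n) :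
    dCount n i = catalan n := by
  rw [dCount, ← card_ts n]
  apply Nat.card_congr
  refine Equiv.trans (Equiv.subtypeEquivRight
    (q := fun p : (ℕ → ℕ → Prop) × (ℕ → ℕ → Prop) =>
      IsTransferSystem n p.2 ∧ p.1 = completeTS n) ?_) ?_
  · intro p
    constructor
    · rintro ⟨h1, h2, h3, h4⟩
      exact ⟨h2, (himg p.1).mp h4⟩
    · rintro ⟨h2, hc⟩
      exact ⟨hc ▸ complete_isTS n, h2, hc ▸ compat_complete h2, (himg p.1).mpr hc⟩
  · exact
      { toFun := fun p => ⟨p.1.2, p.2.1⟩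
        invFun := fun R => ⟨(completeTS n, R.1), R.2, rfl⟩
        left_inv := fun p => by
          obtain ⟨⟨a, b⟩, h2, hc⟩ := p
          apply Subtype.ext
          show (completeTS n, b) = (a, b)
          rw [show a = completeTS n from hc]
        right_inv := fun R => rfl }

/-- For `n ≥ 1`, `d(n, n) = d(n, n - 1) = Cat(n)`; that is, the number of
transfer systems on `[n]` compatible with the complete transfer system is `Cat(n)`, and
the only transfer system on `[n]` in the image of the `(n-1)`-fold wrapping map is the
complete one. -/
theorem dCount_base_case (n : ℕ) (hn : 1 ≤ n) :
    dCount n n = catalan n ∧ dCount n (n - 1) = catalan n ∧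
    Nat.card {Rm : ℕ → ℕ → Prop //
      IsTransferSystem n Rm ∧ Compatible (completeTS n) Rm} = catalan n ∧
    ∀ R : ℕ → ℕ → Prop, IsTransferSystem n R →
      ((∃ R' : ℕ → ℕ → Prop, IsTransferSystem 1 R' ∧ R = wpow 1 (n - 1) R') ↔
        R = completeTS n) := by
  have hsub : n - (n - 1) = 1 := by omega
  refine ⟨dCount_eq_catalan (himg_n hn), dCount_eq_catalan ?_, ?_, fun R _ => himg_pred hn R⟩
  · rw [hsub]
    exact himg_pred hn
  · rw [← card_ts n]
    exact Nat.card_congr (Equiv.subtypeEquivRight fun R =>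
      ⟨fun h => h.1, fun h => ⟨h, compat_complete h⟩⟩)
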